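/- arXiv:1911.06287 — 6 statements merged into one kernel-verified Lean document; each statement's English description precedes it below -/
import Mathlib

section
/- For all y ∈ ℝ^p and x ∈ ℝ^m, the likelihood ratio is preserved under projection: 𝒩(y | H x, Σ) / 𝒩(y | 0, Σ) = 𝒩(T y | x, Σ_T) / 𝒩(T y | 0, Σ_T). -/
/-!
With `A = HᵀΣ⁻¹H`, the log-likelihood ratio of `𝒩(· | Hx, Σ)` against `𝒩(· | 0, Σ)` at `y` is
`xᵀHᵀΣ⁻¹y − ½ xᵀAx`. Since `HᵀΣ⁻¹ = A T`, this equals `xᵀA(Ty) − ½ xᵀAx`, which is the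
log-likelihood ratio of `𝒩(· | x, A⁻¹)` against `𝒩(· | 0, A⁻¹)` at `Ty`. The normalising
constants cancel in each ratio, so only these exponents matter.
-/

open Matrix

/-- The Gaussian density `𝒩(z | μ, C) = (2π)^(−k/2) (det C)^(−1/2) exp(−½ (z−μ)ᵀ C⁻¹ (z−μ))`. -/
noncomputable def gaussDensity {k : ℕ} (z μ : Fin k → ℝ) (C : Matrix (Fin k) (Fin k) ℝ) : ℝ :=
  (2 * Real.pi) ^ (-(k : ℝ) / 2) * C.det ^ (-(1 : ℝ) / 2) *
    Real.exp (-(1 / 2) * ((z - μ) ⬝ᵥ C⁻¹.mulVec (z - μ)))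

namespace Matrix

variable {ι κ R : Type*} [Fintype ι] [Fintype κ]

theorem mulVec_dotProduct_mulVec [CommSemiring R] (B : Matrix ι κ R) (Q : Matrix ι ι R)
    (x : κ → R) (w : ι → R) : (B *ᵥ x) ⬝ᵥ Q *ᵥ w = x ⬝ᵥ (Bᵀ * Q) *ᵥ w := by
  rw [dotProduct_comm, ← dotProduct_transpose_mulVec, ← mulVec_mulVec, dotProduct_comm]

theorem IsSymm.sub_dotProduct_mulVec_sub [CommRing R] {Q : Matrix ι ι R} (hQ : Q.IsSymm)
    (z μ : ι → R) :
    (z - μ) ⬝ᵥ Q *ᵥ (z - μ) = z ⬝ᵥ Q *ᵥ z - 2 * (μ ⬝ᵥ Q *ᵥ z) + μ ⬝ᵥ Q *ᵥ μ := by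
  have hcomm : z ⬝ᵥ Q *ᵥ μ = μ ⬝ᵥ Q *ᵥ z := by
    rw [← dotProduct_transpose_mulVec, hQ.eq]
  simp only [mulVec_sub, sub_dotProduct, dotProduct_sub, hcomm]
  ring

end Matrix

theorem gaussDensity_div_gaussDensity_zero {k : ℕ} {C : Matrix (Fin k) (Fin k) ℝ}
    (hC : C.PosDef) (z μ : Fin k → ℝ) :
    gaussDensity z μ C / gaussDensity z 0 C =
      Real.exp (μ ⬝ᵥ C⁻¹ *ᵥ z - μ ⬝ᵥ C⁻¹ *ᵥ μ / 2) := by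
  have hconst : (2 * Real.pi) ^ (-(k : ℝ) / 2) * C.det ^ (-(1 : ℝ) / 2) ≠ 0 := by
    have := hC.det_pos
    positivity
  have hsymm : C⁻¹.IsSymm := by
    simpa [IsSymm, conjTranspose_eq_transpose_of_trivial] using hC.inv.isHermitian
  unfold gaussDensity
  rw [mul_div_mul_left _ _ hconst, ← Real.exp_sub, hsymm.sub_dotProduct_mulVec_sub, sub_zero]
  ring_nf

/-- the likelihood ratio is preserved under the projection:
`𝒩(y | Hx, Σ) / 𝒩(y | 0, Σ) = 𝒩(Ty | x, Σ_T) / 𝒩(Ty | 0, Σ_T)`. -/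
theorem stmt_4 {p m : ℕ} (H : Matrix (Fin p) (Fin m) ℝ) (Cov : Matrix (Fin p) (Fin p) ℝ)
    (hH : LinearIndependent ℝ (fun j i => H i j)) (hCov : Cov.PosDef)
    (T : Matrix (Fin m) (Fin p) ℝ) (hT : T = (Hᵀ * Cov⁻¹ * H)⁻¹ * Hᵀ * Cov⁻¹)
    (CovT : Matrix (Fin m) (Fin m) ℝ) (hCovT : CovT = (Hᵀ * Cov⁻¹ * H)⁻¹) :
    ∀ (y : Fin p → ℝ) (x : Fin m → ℝ),
      gaussDensity y (H.mulVec x) Cov / gaussDensity y 0 Cov =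
        gaussDensity (T.mulVec y) x CovT / gaussDensity (T.mulVec y) 0 CovT := by
  intro y x
  subst hT hCovT
  set A := Hᵀ * Cov⁻¹ * H
  have hA : A.PosDef := by
    simpa [conjTranspose_eq_transpose_of_trivial] using
      hCov.inv.conjTranspose_mul_mul_same (mulVec_injective_iff.mpr hH)
  have hAdet : IsUnit A.det := hA.det_pos.ne'.isUnit
  have hAT : A * (A⁻¹ * Hᵀ * Cov⁻¹) = Hᵀ * Cov⁻¹ := by
    rw [← Matrix.mul_assoc, ← Matrix.mul_assoc, mul_nonsing_inv A hAdet, Matrix.one_mul]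
  rw [gaussDensity_div_gaussDensity_zero hCov, gaussDensity_div_gaussDensity_zero hA.inv,
    nonsing_inv_nonsing_inv A hAdet, mulVec_dotProduct_mulVec, mulVec_dotProduct_mulVec,
    mulVec_mulVec, mulVec_mulVec, hAT]
end

section
/- For y₁, y₂ ∈ ℝ^p, the function x ↦ (y₁ − H x)ᵀ Σ⁻¹ (y₁ − H x) − (y₂ − H x)ᵀ Σ⁻¹ (y₂ − H x) is constant on ℝ^m if and only if T y₁ = T y₂. (This is the characterization by which T y is a minimal sufficient statistic for x under the likelihood 𝒩(y | H x, Σ).) -/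
/-!
Since `Σ⁻¹` is symmetric, expanding the two quadratic forms cancels the terms quadratic in `x`,
leaving `c - 2 xᵀ Hᵀ Σ⁻¹ (y₁ - y₂)`. This is constant in `x` exactly when
`Hᵀ Σ⁻¹ y₁ = Hᵀ Σ⁻¹ y₂`, and since `T` is this map followed by the invertible `(Hᵀ Σ⁻¹ H)⁻¹`,
that is the same as `T y₁ = T y₂`.
-/

open Matrix

namespace Matrix

variable {m n R : Type*} [Fintype m] [Fintype n]

theorem IsSymm.dotProduct_mulVec_comm [CommSemiring R] {A : Matrix n n R} (hA : A.IsSymm)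
    (u v : n → R) : u ⬝ᵥ A *ᵥ v = v ⬝ᵥ A *ᵥ u := by
  rw [← dotProduct_transpose_mulVec, hA.eq]

theorem IsSymm.dotProduct_mulVec_sub_sub_mulVec [CommRing R] {A : Matrix n n R} (hA : A.IsSymm)
    (H : Matrix n m R) (y₁ y₂ : n → R) (x : m → R) :
    (y₁ - H *ᵥ x) ⬝ᵥ A *ᵥ (y₁ - H *ᵥ x) - (y₂ - H *ᵥ x) ⬝ᵥ A *ᵥ (y₂ - H *ᵥ x) =
      y₁ ⬝ᵥ A *ᵥ y₁ - y₂ ⬝ᵥ A *ᵥ y₂ - 2 * (x ⬝ᵥ (Hᵀ * A) *ᵥ (y₁ - y₂)) := by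
  rw [← mulVec_mulVec, dotProduct_transpose_mulVec, dotProduct_comm (A *ᵥ (y₁ - y₂))]
  simp only [mulVec_sub, sub_dotProduct, dotProduct_sub, hA.dotProduct_mulVec_comm y₁ (H *ᵥ x),
    hA.dotProduct_mulVec_comm y₂ (H *ᵥ x)]
  ring

theorem forall_dotProduct_eq_iff [CommSemiring R] {w : m → R} :
    (∀ x x' : m → R, x ⬝ᵥ w = x' ⬝ᵥ w) ↔ w = 0 := by
  refine ⟨fun h => dotProduct_eq_zero w fun x => ?_, fun hw x x' => by simp [hw]⟩
  rw [dotProduct_comm, h x 0, zero_dotProduct]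

theorem IsSymm.forall_dotProduct_mulVec_sub_sub_mulVec_eq_iff {K : Type*} [Field K]
    [NeZero (2 : K)] {A : Matrix n n K} (hA : A.IsSymm) (H : Matrix n m K) (y₁ y₂ : n → K) :
    (∀ x x' : m → K,
        (y₁ - H *ᵥ x) ⬝ᵥ A *ᵥ (y₁ - H *ᵥ x) - (y₂ - H *ᵥ x) ⬝ᵥ A *ᵥ (y₂ - H *ᵥ x) =
          (y₁ - H *ᵥ x') ⬝ᵥ A *ᵥ (y₁ - H *ᵥ x') - (y₂ - H *ᵥ x') ⬝ᵥ A *ᵥ (y₂ - H *ᵥ x')) ↔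
      (Hᵀ * A) *ᵥ y₁ = (Hᵀ * A) *ᵥ y₂ := by
  rw [← sub_eq_zero, ← mulVec_sub, ← forall_dotProduct_eq_iff]
  simp only [hA.dotProduct_mulVec_sub_sub_mulVec, sub_right_inj, mul_right_inj' (two_ne_zero' K)]

theorem mulVec_nonsing_inv_mul_eq_iff [CommRing R] [DecidableEq m] {G : Matrix m m R}
    (hG : IsUnit G) (B : Matrix m n R) (y₁ y₂ : n → R) :
    (G⁻¹ * B) *ᵥ y₁ = (G⁻¹ * B) *ᵥ y₂ ↔ B *ᵥ y₁ = B *ᵥ y₂ := by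
  simp only [← mulVec_mulVec]
  exact (mulVec_injective_of_isUnit (isUnit_nonsing_inv_iff.2 hG)).eq_iff

theorem PosDef.transpose_mul_mul_of_linearIndependent {A : Matrix n n ℝ} (hA : A.PosDef)
    {H : Matrix n m ℝ} (hH : LinearIndependent ℝ H.col) : (Hᵀ * A * H).PosDef := by
  simpa only [conjTranspose_eq_transpose_of_trivial] using
    hA.conjTranspose_mul_mul_same (mulVec_injective_iff.2 hH)

end Matrix

/-- `x ↦ (y₁ − Hx)ᵀΣ⁻¹(y₁ − Hx) − (y₂ − Hx)ᵀΣ⁻¹(y₂ − Hx)` is constant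
iff `T y₁ = T y₂`. -/
theorem stmt_5 {p m : ℕ} (H : Matrix (Fin p) (Fin m) ℝ) (Cov : Matrix (Fin p) (Fin p) ℝ)
    (hH : LinearIndependent ℝ (fun j i => H i j)) (hCov : Cov.PosDef)
    (T : Matrix (Fin m) (Fin p) ℝ) (hT : T = (Hᵀ * Cov⁻¹ * H)⁻¹ * Hᵀ * Cov⁻¹)
    (y₁ y₂ : Fin p → ℝ) :
    (∀ x x' : Fin m → ℝ,
        (y₁ - H.mulVec x) ⬝ᵥ Cov⁻¹.mulVec (y₁ - H.mulVec x) -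
            (y₂ - H.mulVec x) ⬝ᵥ Cov⁻¹.mulVec (y₂ - H.mulVec x) =
          (y₁ - H.mulVec x') ⬝ᵥ Cov⁻¹.mulVec (y₁ - H.mulVec x') -
            (y₂ - H.mulVec x') ⬝ᵥ Cov⁻¹.mulVec (y₂ - H.mulVec x')) ↔
      T.mulVec y₁ = T.mulVec y₂ := by
  have hInv : Cov⁻¹.PosDef := hCov.inv
  have hGram : IsUnit (Hᵀ * Cov⁻¹ * H) := (hInv.transpose_mul_mul_of_linearIndependent hH).isUnit
  rw [(isHermitian_iff_isSymm.1 hInv.isHermitian).forall_dotProduct_mulVec_sub_sub_mulVec_eq_iff,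
    hT, Matrix.mul_assoc, mulVec_nonsing_inv_mul_eq_iff hGram]
end

section
/- Suppose H = Σ^{1/2} U S^{1/2} where U is a real p×m matrix with orthonormal columns (UᵀU = I_m) and S is a diagonal m×m matrix with strictly positive diagonal entries, and fix this U. Then there exists a diagonal m×m matrix D with strictly positive diagonal entries such that H = U D^{1/2} if and only if every column of U is an eigenvector of Σ. -/
open Matrix

/-- The square root of a positive semidefinite matrix, as defined in Mathlib (Dec 2024). -/
noncomputable def Matrix.PosSemidef.sqrt {n 𝕜 : Type*} [Fintype n] [DecidableEq n] [RCLike 𝕜]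
    [PartialOrder 𝕜] [StarOrderedRing 𝕜] {A : Matrix n n 𝕜} (hA : A.PosSemidef) : Matrix n n 𝕜 :=
  hA.1.eigenvectorUnitary.1 * diagonal ((↑) ∘ (√·) ∘ hA.1.eigenvalues) *
    (star hA.1.eigenvectorUnitary : Matrix n n 𝕜)

lemma stmt_10_sqrt_mul_self {p : ℕ} {A : Matrix (Fin p) (Fin p) ℝ} (hA : A.PosSemidef) :
    hA.sqrt * hA.sqrt = A := by
  conv_rhs => rw [hA.1.spectral_theorem, Unitary.conjStarAlgAut_apply]
  unfold Matrix.PosSemidef.sqrt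
  have hV : (star hA.1.eigenvectorUnitary : Matrix (Fin p) (Fin p) ℝ) * hA.1.eigenvectorUnitary.1
      = 1 := Unitary.coe_star_mul_self _
  calc _ = hA.1.eigenvectorUnitary.1 * (diagonal ((RCLike.ofReal : ℝ → ℝ) ∘ (√·) ∘ hA.1.eigenvalues) *
        ((star hA.1.eigenvectorUnitary : Matrix (Fin p) (Fin p) ℝ) * hA.1.eigenvectorUnitary.1) *
        diagonal ((RCLike.ofReal : ℝ → ℝ) ∘ (√·) ∘ hA.1.eigenvalues)) *
        (star hA.1.eigenvectorUnitary : Matrix (Fin p) (Fin p) ℝ) := by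
          simp only [Matrix.mul_assoc]
    _ = _ := by
      rw [hV, Matrix.mul_one, diagonal_mul_diagonal]
      congr 3
      funext i
      simp [Real.mul_self_sqrt (hA.eigenvalues_nonneg i)]

lemma stmt_10_posSemidef_sqrt {p : ℕ} {A : Matrix (Fin p) (Fin p) ℝ} (hA : A.PosSemidef) :
    hA.sqrt.PosSemidef := by
  unfold Matrix.PosSemidef.sqrt
  rw [star_eq_conjTranspose]
  apply PosSemidef.mul_mul_conjTranspose_same
  rw [posSemidef_diagonal_iff]
  intro i
  simp [Real.sqrt_nonneg]

/-- given `H = Σ^{1/2} U S^{1/2}` with `UᵀU = I` and diagonal `S > 0`,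
`H` is of the form `U D^{1/2}` with diagonal `D > 0` iff every column of `U` is an
eigenvector of `Σ`. -/
theorem stmt_10 {p m : ℕ} (H : Matrix (Fin p) (Fin m) ℝ) (Cov : Matrix (Fin p) (Fin p) ℝ)
    (hH : LinearIndependent ℝ (fun j i => H i j)) (hCov : Cov.PosDef)
    (U : Matrix (Fin p) (Fin m) ℝ) (s : Fin m → ℝ)
    (hU : Uᵀ * U = 1) (hs : ∀ i, 0 < s i)
    (hHdef : H = hCov.posSemidef.sqrt * U * Matrix.diagonal (fun i => Real.sqrt (s i))) :
    (∃ d : Fin m → ℝ, (∀ i, 0 < d i) ∧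
        H = U * Matrix.diagonal (fun i => Real.sqrt (d i))) ↔
      ∀ j : Fin m, ∃ μ : ℝ, Cov.mulVec (fun i => U i j) = μ • (fun i => U i j) := by
  set R := hCov.posSemidef.sqrt with hR
  have hRR : R * R = Cov := stmt_10_sqrt_mul_self hCov.posSemidef
  have hRsd : R.PosSemidef := stmt_10_posSemidef_sqrt hCov.posSemidef
  have hcolnz : ∀ j : Fin m, (fun i => U i j) ≠ 0 := by
    intro j hz
    have h1 : (Uᵀ * U) j j = (1 : Matrix (Fin m) (Fin m) ℝ) j j := by rw [hU]
    have : ∀ i, U i j = 0 := fun i => congrFun hz i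
    simp [Matrix.mul_apply, Matrix.one_apply, this] at h1
  constructor
  · rintro ⟨d, hd, hHd⟩ j
    refine ⟨d j / s j, ?_⟩
    have hcol : R.mulVec (fun k => U k j)
        = (Real.sqrt (d j) / Real.sqrt (s j)) • (fun k => U k j) := by
      funext i
      have h1 : (R * U * Matrix.diagonal (fun i => Real.sqrt (s i))) i j
          = (U * Matrix.diagonal (fun i => Real.sqrt (d i))) i j := by
        rw [← hHdef, ← hHd]
      rw [Matrix.mul_diagonal, Matrix.mul_diagonal] at h1
      have hsj : Real.sqrt (s j) ≠ 0 := ne_of_gt (Real.sqrt_pos.2 (hs j))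
      have h2 : (R * U) i j = Real.sqrt (d j) / Real.sqrt (s j) * U i j := by
        field_simp
        linarith [h1]
      simp only [Matrix.mul_apply, Matrix.mulVec, dotProduct] at h2 ⊢
      simpa using h2
    have h3 := congrArg (fun v => R.mulVec v) hcol
    simp only [Matrix.mulVec_smul] at h3
    rw [hcol] at h3
    have hCovcol : Cov.mulVec (fun k => U k j)
        = (Real.sqrt (d j) / Real.sqrt (s j) * (Real.sqrt (d j) / Real.sqrt (s j)))
          • (fun k => U k j) := by
      rw [← hRR, ← Matrix.mulVec_mulVec, hcol, Matrix.mulVec_smul, hcol, smul_smul]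
    rw [hCovcol]
    congr 1
    rw [div_mul_div_comm, Real.mul_self_sqrt (le_of_lt (hd j)),
      Real.mul_self_sqrt (le_of_lt (hs j))]
  · intro hev
    have key : ∀ j : Fin m, ∃ μ : ℝ, 0 < μ ∧
        R.mulVec (fun i => U i j) = Real.sqrt μ • (fun i => U i j) := by
      intro j
      obtain ⟨μ, hμ⟩ := hev j
      set u : Fin p → ℝ := fun i => U i j with hu
      have hμpos : 0 < μ := by
        have hpos := hCov.dotProduct_mulVec_pos (hcolnz j)
        rw [star_trivial, hμ] at hpos
        rw [dotProduct_smul, smul_eq_mul] at hpos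
        have hnn : 0 ≤ dotProduct u u := Finset.sum_nonneg fun i _ => mul_self_nonneg _
        nlinarith
      refine ⟨μ, hμpos, ?_⟩
      set w : Fin p → ℝ := R.mulVec u - Real.sqrt μ • u with hw
      have hsq : Real.sqrt μ * Real.sqrt μ = μ := Real.mul_self_sqrt hμpos.le
      have hRw : R.mulVec w = (-Real.sqrt μ) • w := by
        rw [hw, Matrix.mulVec_sub, Matrix.mulVec_smul, Matrix.mulVec_mulVec, hRR, hμ]
        funext i
        simp only [Pi.sub_apply, Pi.smul_apply, smul_eq_mul]
        linear_combination (-u i) * hsq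
      have hwz : w = 0 := by
        have hpos := hRsd.dotProduct_mulVec_nonneg w
        rw [star_trivial, hRw] at hpos
        rw [dotProduct_smul, smul_eq_mul] at hpos
        have hnn : 0 ≤ dotProduct w w := Finset.sum_nonneg fun i _ => mul_self_nonneg _
        have hsp : 0 < Real.sqrt μ := Real.sqrt_pos.2 hμpos
        have : dotProduct w w = 0 := by nlinarith
        exact dotProduct_self_eq_zero.mp this
      have := sub_eq_zero.mp (hw ▸ hwz)
      exact this
    choose μ hμpos hμ using key
    refine ⟨fun j => s j * μ j, fun j => mul_pos (hs j) (hμpos j), ?_⟩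
    funext i j
    rw [hHdef, Matrix.mul_diagonal, Matrix.mul_diagonal]
    have h4 : (R * U) i j = R.mulVec (fun k => U k j) i := by
      simp [Matrix.mul_apply, Matrix.mulVec, dotProduct]
    rw [h4, hμ j]
    simp only [Pi.smul_apply, smul_eq_mul]
    rw [Real.sqrt_mul (hs j).le]
    ring
end

section
/- Let U be a real p×m matrix with orthonormal columns (UᵀU = I_m), S a diagonal m×m matrix with strictly positive diagonal entries, H = U S^{1/2}, D a diagonal m×m matrix with nonnegative diagonal entries, σ > 0, and Σ = σ² I_p + H D Hᵀ. Then Σ is positive definite, the projection satisfies (HᵀΣ⁻¹H)⁻¹HᵀΣ⁻¹ = S^{−1/2} Uᵀ, and the projected noise satisfies (S^{−1/2} Uᵀ) Σ (S^{−1/2} Uᵀ)ᵀ = σ² S⁻¹ + D. -/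
open Matrix

/-- for the OILMM, `Σ = σ²I + HDHᵀ` is positive definite, the projection is
`T = S^{−1/2}Uᵀ`, and the projected noise is `T Σ Tᵀ = σ²S⁻¹ + D`. -/
theorem stmt_11 {p m : ℕ} (U : Matrix (Fin p) (Fin m) ℝ) (s d : Fin m → ℝ) (σ : ℝ)
    (hU : Uᵀ * U = 1) (hs : ∀ i, 0 < s i) (hd : ∀ i, 0 ≤ d i) (hσ : 0 < σ)
    (H : Matrix (Fin p) (Fin m) ℝ)
    (hH : H = U * Matrix.diagonal (fun i => Real.sqrt (s i)))
    (Cov : Matrix (Fin p) (Fin p) ℝ)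
    (hCov : Cov = σ ^ 2 • (1 : Matrix (Fin p) (Fin p) ℝ) + H * Matrix.diagonal d * Hᵀ)
    (T : Matrix (Fin m) (Fin p) ℝ)
    (hT : T = Matrix.diagonal (fun i => (Real.sqrt (s i))⁻¹) * Uᵀ) :
    Cov.PosDef ∧
      (Hᵀ * Cov⁻¹ * H)⁻¹ * Hᵀ * Cov⁻¹ = T ∧
      T * Cov * Tᵀ = σ ^ 2 • (Matrix.diagonal s)⁻¹ + Matrix.diagonal d := by
  have hrsp : ∀ i, 0 < Real.sqrt (s i) := fun i => Real.sqrt_pos.mpr (hs i)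
  have hrssq : ∀ i, Real.sqrt (s i) * Real.sqrt (s i) = s i :=
    fun i => Real.mul_self_sqrt (hs i).le
  have hMe : ∀ i, σ ^ 2 + s i * d i ≠ 0 := fun i =>
    (add_pos_of_pos_of_nonneg (pow_pos hσ 2) (mul_nonneg (hs i).le (hd i))).ne'
  set M : Matrix (Fin m) (Fin m) ℝ := Matrix.diagonal (fun i => σ ^ 2 + s i * d i) with hM
  set Minv : Matrix (Fin m) (Fin m) ℝ :=
    Matrix.diagonal (fun i => (σ ^ 2 + s i * d i)⁻¹) with hMinv
  have hMMinv : M * Minv = 1 := by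
    rw [hM, hMinv, Matrix.diagonal_mul_diagonal,
      show (fun i => (σ ^ 2 + s i * d i) * (σ ^ 2 + s i * d i)⁻¹) = fun _ => (1 : ℝ) from
        funext fun i => mul_inv_cancel₀ (hMe i), Matrix.diagonal_one]
  have hHt : Hᵀ = Matrix.diagonal (fun i => Real.sqrt (s i)) * Uᵀ := by
    rw [hH, Matrix.transpose_mul, Matrix.diagonal_transpose]
  -- positive definiteness
  have hPD : Cov.PosDef := by
    rw [hCov]
    refine Matrix.PosDef.add_posSemidef ?_ ?_
    · rw [Matrix.smul_one_eq_diagonal]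
      exact Matrix.posDef_diagonal_iff.mpr fun _ => pow_pos hσ 2
    · have h0 : (Matrix.diagonal d).PosSemidef := Matrix.posSemidef_diagonal_iff.mpr hd
      simpa using h0.mul_mul_conjTranspose_same H
  have hdet : IsUnit Cov.det := isUnit_iff_ne_zero.mpr hPD.det_pos.ne'
  have hCovSymm : Covᵀ = Cov := hPD.isHermitian.eq
  -- Cov * U = U * M
  have hCovU : Cov * U = U * M := by
    rw [hCov, hHt, hH]
    simp only [Matrix.add_mul, Matrix.smul_mul, Matrix.one_mul, Matrix.mul_assoc, hU,
      Matrix.mul_one]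
    have hmerge : (Matrix.diagonal fun i => Real.sqrt (s i))
        * (Matrix.diagonal d * Matrix.diagonal fun i => Real.sqrt (s i))
        = Matrix.diagonal fun i => s i * d i := by
      rw [Matrix.diagonal_mul_diagonal, Matrix.diagonal_mul_diagonal]
      refine congrArg _ (funext fun i => ?_)
      show Real.sqrt (s i) * (d i * Real.sqrt (s i)) = s i * d i
      have h := hrssq i
      set r := Real.sqrt (s i) with hri
      rw [← h]; ring
    rw [hmerge, hM,
      show (Matrix.diagonal fun i => σ ^ 2 + s i * d i)
          = σ ^ 2 • (1 : Matrix (Fin m) (Fin m) ℝ) + Matrix.diagonal fun i => s i * d i by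
        rw [Matrix.smul_one_eq_diagonal, ← Matrix.diagonal_add],
      Matrix.mul_add, Matrix.mul_smul, Matrix.mul_one]
  have hCovinvU : Cov⁻¹ * U = U * Minv := by
    have h1 : Cov⁻¹ * (Cov * U) = U := by
      rw [← Matrix.mul_assoc, Matrix.nonsing_inv_mul _ hdet, Matrix.one_mul]
    rw [hCovU] at h1
    calc Cov⁻¹ * U = Cov⁻¹ * (U * (M * Minv)) := by rw [hMMinv, Matrix.mul_one]
      _ = (Cov⁻¹ * (U * M)) * Minv := by simp only [Matrix.mul_assoc]
      _ = U * Minv := by rw [h1]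
  have hUtCovinv : Uᵀ * Cov⁻¹ = Minv * Uᵀ := by
    have := congrArg Matrix.transpose hCovinvU
    rw [Matrix.transpose_mul, Matrix.transpose_mul, Matrix.transpose_nonsing_inv,
      hCovSymm, hMinv, Matrix.diagonal_transpose] at this
    exact this
  refine ⟨hPD, ?_, ?_⟩
  · -- projection
    have hG : Hᵀ * Cov⁻¹ * H = Matrix.diagonal fun i => s i * (σ ^ 2 + s i * d i)⁻¹ := by
      rw [hHt, hH, Matrix.mul_assoc (Matrix.diagonal fun i => Real.sqrt (s i)), hUtCovinv]
      calc (Matrix.diagonal fun i => Real.sqrt (s i)) * (Minv * Uᵀ)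
            * (U * Matrix.diagonal fun i => Real.sqrt (s i))
          = (Matrix.diagonal fun i => Real.sqrt (s i))
            * (Minv * ((Uᵀ * U) * Matrix.diagonal fun i => Real.sqrt (s i))) := by
            simp only [Matrix.mul_assoc]
        _ = (Matrix.diagonal fun i => Real.sqrt (s i))
            * (Minv * Matrix.diagonal fun i => Real.sqrt (s i)) := by
            rw [hU, Matrix.one_mul]
        _ = _ := by
            rw [hMinv, Matrix.diagonal_mul_diagonal, Matrix.diagonal_mul_diagonal,
              show (fun i => Real.sqrt (s i) * ((σ ^ 2 + s i * d i)⁻¹ * Real.sqrt (s i)))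
                  = fun i => s i * (σ ^ 2 + s i * d i)⁻¹ from funext fun i => by
                have h := hrssq i
                set r := Real.sqrt (s i) with hri
                rw [← h]; ring]
    have hGinv : (Hᵀ * Cov⁻¹ * H)⁻¹
        = Matrix.diagonal fun i => (σ ^ 2 + s i * d i) / s i := by
      apply Matrix.inv_eq_right_inv
      rw [hG, Matrix.diagonal_mul_diagonal,
        show (fun i => s i * (σ ^ 2 + s i * d i)⁻¹ * ((σ ^ 2 + s i * d i) / s i))
            = fun _ => (1 : ℝ) from funext fun i => by
          field_simp
          exact div_self (mul_ne_zero (hs i).ne' (hMe i)), Matrix.diagonal_one]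
    rw [Matrix.mul_assoc ((Hᵀ * Cov⁻¹ * H)⁻¹) Hᵀ Cov⁻¹, hGinv, hHt,
      Matrix.mul_assoc (Matrix.diagonal fun i => Real.sqrt (s i)), hUtCovinv, hT,
      ← Matrix.mul_assoc, ← Matrix.mul_assoc, Matrix.diagonal_mul_diagonal, hMinv,
      Matrix.diagonal_mul_diagonal,
      show (fun i => (σ ^ 2 + s i * d i) / s i * Real.sqrt (s i) * (σ ^ 2 + s i * d i)⁻¹)
          = fun i => (Real.sqrt (s i))⁻¹ from funext fun i => ?_]
    have h := hrssq i
    have h2 : Real.sqrt (s i) ≠ 0 := (hrsp i).ne'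
    have h3 := hMe i
    set r := Real.sqrt (s i) with hri
    rw [← h] at h3 ⊢
    field_simp
    exact div_self (by rw [pow_two r]; exact h3)
  · -- projected noise
    have hTt : Tᵀ = U * Matrix.diagonal fun i => (Real.sqrt (s i))⁻¹ := by
      rw [hT, Matrix.transpose_mul, Matrix.diagonal_transpose, Matrix.transpose_transpose]
    rw [hTt, hT]
    simp only [Matrix.mul_assoc]
    rw [← Matrix.mul_assoc Cov U, hCovU, Matrix.mul_assoc U M, ← Matrix.mul_assoc Uᵀ U, hU,
      Matrix.one_mul, hM, Matrix.diagonal_mul_diagonal, Matrix.diagonal_mul_diagonal]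
    have hsinv : (Matrix.diagonal s)⁻¹ = Matrix.diagonal fun i => (s i)⁻¹ := by
      apply Matrix.inv_eq_right_inv
      rw [Matrix.diagonal_mul_diagonal,
        show (fun i => s i * (s i)⁻¹) = fun _ => (1 : ℝ) from
          funext fun i => mul_inv_cancel₀ (hs i).ne', Matrix.diagonal_one]
    rw [hsinv, ← Matrix.diagonal_smul, Matrix.diagonal_add]
    refine congrArg Matrix.diagonal (funext fun i => ?_)
    simp only [Pi.add_apply, Pi.smul_apply, smul_eq_mul]
    have h := hrssq i
    have h2 : Real.sqrt (s i) ≠ 0 := (hrsp i).ne'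
    set r := Real.sqrt (s i) with hri
    rw [← h]
    field_simp
end

section
/- Let U be a real p×m matrix with orthonormal columns (UᵀU = I_m), S a diagonal m×m matrix with strictly positive diagonal entries, H = U S^{1/2}, D a diagonal m×m matrix with nonnegative diagonal entries, and σ > 0. Let ι : {1,…,p₀} → {1,…,p} be injective ('observed rows'), let U_o be the p₀×m matrix with rows (U_o)_{i:} = U_{ι(i):}, and assume the columns of U_o are linearly independent. Let H_o = U_o S^{1/2} and Σ_o = σ² I_{p₀} + H_o D H_oᵀ. Then Σ_o is positive definite, (H_oᵀ Σ_o⁻¹ H_o)⁻¹ H_oᵀ Σ_o⁻¹ = S^{−1/2} (U_oᵀ U_o)⁻¹ U_oᵀ, and (H_oᵀ Σ_o⁻¹ H_o)⁻¹ = σ² S^{−1/2} (U_oᵀ U_o)⁻¹ S^{−1/2} + D. -/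
open Matrix

private lemma posDef_tr_mul_self {p m : ℕ} (A : Matrix (Fin p) (Fin m) ℝ)
    (hA : ∀ x, A *ᵥ x = 0 → x = 0) : (Aᵀ * A).PosDef := by
  refine Matrix.PosDef.of_dotProduct_mulVec_pos ?_ fun x hx => ?_
  · rw [← Matrix.conjTranspose_eq_transpose_of_trivial]
    exact Matrix.isHermitian_conjTranspose_mul_self A
  · have hAx : A *ᵥ x ≠ 0 := fun h => hx (hA x h)
    have h1 : star x ⬝ᵥ ((Aᵀ * A) *ᵥ x) = (A *ᵥ x) ⬝ᵥ (A *ᵥ x) := by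
      rw [star_trivial, ← Matrix.mulVec_mulVec, dotProduct_mulVec,
        Matrix.vecMul_transpose]
    rw [h1]
    refine lt_of_le_of_ne (Finset.sum_nonneg fun i _ => mul_self_nonneg _) ?_
    exact fun h => hAx (dotProduct_self_eq_zero.mp h.symm)

private lemma posDef_smul' {m : ℕ} {M : Matrix (Fin m) (Fin m) ℝ} (hM : M.PosDef)
    {c : ℝ} (hc : 0 < c) : (c • M).PosDef := by
  refine Matrix.PosDef.of_dotProduct_mulVec_pos ?_ fun x hx => ?_
  · show (c • M)ᴴ = c • M
    rw [Matrix.conjTranspose_smul, star_trivial, hM.1.eq]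
  · rw [Matrix.smul_mulVec, dotProduct_smul, smul_eq_mul]
    exact mul_pos hc (hM.dotProduct_mulVec_pos hx)

/-- OILMM with missing data. With observed rows selected by the injection `ι`,
`Σ_o = σ²I + H_o D H_oᵀ` is positive definite, the projection is
`T_o = S^{−1/2}(U_oᵀU_o)⁻¹U_oᵀ`, and the projected noise is
`(H_oᵀΣ_o⁻¹H_o)⁻¹ = σ²S^{−1/2}(U_oᵀU_o)⁻¹S^{−1/2} + D`. -/
theorem stmt_14 {p m p₀ : ℕ} (U : Matrix (Fin p) (Fin m) ℝ) (s d : Fin m → ℝ) (σ : ℝ)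
    (hU : Uᵀ * U = 1) (hs : ∀ i, 0 < s i) (hd : ∀ i, 0 ≤ d i) (hσ : 0 < σ)
    (H : Matrix (Fin p) (Fin m) ℝ)
    (hH : H = U * Matrix.diagonal (fun i => Real.sqrt (s i)))
    (ι : Fin p₀ → Fin p) (hι : Function.Injective ι)
    (Uo : Matrix (Fin p₀) (Fin m) ℝ) (hUo : Uo = U.submatrix ι id)
    (hUoInd : LinearIndependent ℝ (fun j i => Uo i j))
    (Ho : Matrix (Fin p₀) (Fin m) ℝ) (hHo : Ho = Uo * Matrix.diagonal (fun i => Real.sqrt (s i)))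
    (Covo : Matrix (Fin p₀) (Fin p₀) ℝ)
    (hCovo : Covo = σ ^ 2 • (1 : Matrix (Fin p₀) (Fin p₀) ℝ) + Ho * Matrix.diagonal d * Hoᵀ) :
    Covo.PosDef ∧
      (Hoᵀ * Covo⁻¹ * Ho)⁻¹ * Hoᵀ * Covo⁻¹ =
        Matrix.diagonal (fun i => (Real.sqrt (s i))⁻¹) * (Uoᵀ * Uo)⁻¹ * Uoᵀ ∧
      (Hoᵀ * Covo⁻¹ * Ho)⁻¹ =
        σ ^ 2 • (Matrix.diagonal (fun i => (Real.sqrt (s i))⁻¹) * (Uoᵀ * Uo)⁻¹ *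
            Matrix.diagonal (fun i => (Real.sqrt (s i))⁻¹)) + Matrix.diagonal d := by
  have hsne : ∀ i, Real.sqrt (s i) ≠ 0 := fun i => (Real.sqrt_pos.mpr (hs i)).ne'
  set Sh : Matrix (Fin m) (Fin m) ℝ := Matrix.diagonal (fun i => Real.sqrt (s i)) with hSh
  set Si : Matrix (Fin m) (Fin m) ℝ :=
    Matrix.diagonal (fun i => (Real.sqrt (s i))⁻¹) with hSi
  have hShSi : Sh * Si = 1 := by
    rw [hSh, hSi, Matrix.diagonal_mul_diagonal]
    have : (fun i => Real.sqrt (s i) * (Real.sqrt (s i))⁻¹) = fun _ : Fin m => (1 : ℝ) :=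
      funext fun i => mul_inv_cancel₀ (hsne i)
    rw [this]
    exact Matrix.diagonal_one
  have hSiSh : Si * Sh = 1 := by
    rw [hSh, hSi, Matrix.diagonal_mul_diagonal]
    have : (fun i => (Real.sqrt (s i))⁻¹ * Real.sqrt (s i)) = fun _ : Fin m => (1 : ℝ) :=
      funext fun i => inv_mul_cancel₀ (hsne i)
    rw [this]
    exact Matrix.diagonal_one
  have hShT : Shᵀ = Sh := by rw [hSh, Matrix.diagonal_transpose]
  set G := Uoᵀ * Uo with hG
  -- injectivity of Uo
  have hUoInj : ∀ x : Fin m → ℝ, Uo *ᵥ x = 0 → x = 0 := by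
    intro x hx
    have hsum : ∑ j, x j • (fun i => Uo i j) = 0 := by
      funext i
      simpa [Matrix.mulVec, dotProduct, Finset.sum_apply, mul_comm] using congrFun hx i
    exact funext (Fintype.linearIndependent_iff.mp hUoInd x hsum)
  have hGPD : G.PosDef := posDef_tr_mul_self Uo hUoInj
  have hHoInj : ∀ x : Fin m → ℝ, Ho *ᵥ x = 0 → x = 0 := by
    intro x hx
    rw [hHo, ← Matrix.mulVec_mulVec] at hx
    have h2 := hUoInj _ hx
    have h3 : (Si * Sh) *ᵥ x = 0 := by rw [← Matrix.mulVec_mulVec, h2, Matrix.mulVec_zero]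
    rwa [hSiSh, Matrix.one_mulVec] at h3
  set K := Hoᵀ * Ho with hK
  have hKPD : K.PosDef := posDef_tr_mul_self Ho hHoInj
  have hHoT : Hoᵀ = Sh * Uoᵀ := by rw [hHo, Matrix.transpose_mul, hShT]
  have hKval : K = Sh * G * Sh := by
    rw [hK, hHoT, hHo, hG]
    simp only [Matrix.mul_assoc]
  -- positive semidefiniteness of the diagonal noise
  have hDPSD : (Matrix.diagonal d).PosSemidef := Matrix.posSemidef_diagonal_iff.mpr hd
  -- Covo is positive definite
  have hCovoPD : Covo.PosDef := by
    rw [hCovo]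
    refine Matrix.PosDef.add_posSemidef (posDef_smul' Matrix.PosDef.one (pow_pos hσ 2)) ?_
    have h4 := hDPSD.mul_mul_conjTranspose_same Ho
    rwa [Matrix.conjTranspose_eq_transpose_of_trivial] at h4
  -- invertibility
  haveI iG : Invertible G := hGPD.isUnit.invertible
  haveI iK : Invertible K := hKPD.isUnit.invertible
  haveI iC : Invertible Covo := hCovoPD.isUnit.invertible
  set N := σ ^ 2 • K⁻¹ + Matrix.diagonal d with hN
  have hNPD : N.PosDef :=
    Matrix.PosDef.add_posSemidef (posDef_smul' hKPD.inv (pow_pos hσ 2)) hDPSD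
  haveI iN : Invertible N := hNPD.isUnit.invertible
  haveI iNK : Invertible (N * K) := invertibleMul N K
  have hShinv : Sh⁻¹ = Si := Matrix.inv_eq_right_inv hShSi
  have hKinv : K⁻¹ = Si * G⁻¹ * Si := by
    rw [hKval, Matrix.mul_inv_rev, Matrix.mul_inv_rev, hShinv, ← Matrix.mul_assoc]
  -- T is a left inverse of Ho
  have hTHo : Si * G⁻¹ * Uoᵀ * Ho = 1 := by
    rw [hHo]
    simp only [Matrix.mul_assoc]
    rw [← Matrix.mul_assoc Uoᵀ Uo Sh, ← hG, Matrix.inv_mul_cancel_left_of_invertible]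
    exact hSiSh
  have hKT : K * (Si * G⁻¹ * Uoᵀ) = Hoᵀ := by
    rw [hKval, hHoT]
    simp only [Matrix.mul_assoc]
    rw [← Matrix.mul_assoc Sh Si (G⁻¹ * Uoᵀ), hShSi, Matrix.one_mul,
      Matrix.mul_inv_cancel_left_of_invertible]
  have hKiT : K⁻¹ * Hoᵀ = Si * G⁻¹ * Uoᵀ := by
    rw [← hKT, Matrix.inv_mul_cancel_left_of_invertible]
  -- main factorization
  have hCH : Covo * Ho = Ho * (N * K) := by
    rw [hCovo, hN, Matrix.add_mul, Matrix.add_mul, Matrix.mul_add, Matrix.smul_mul,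
      Matrix.one_mul, Matrix.smul_mul, Matrix.inv_mul_of_invertible, Matrix.mul_smul,
      Matrix.mul_one]
    congr 1
    rw [hK]
    simp only [Matrix.mul_assoc]
  have h2 : Covo⁻¹ * Ho = Ho * (N * K)⁻¹ := by
    have h5 : Ho = Covo⁻¹ * (Ho * (N * K)) := by
      rw [← hCH, Matrix.inv_mul_cancel_left_of_invertible]
    conv_rhs => rw [h5]
    rw [← Matrix.mul_assoc Covo⁻¹ Ho (N * K), Matrix.mul_inv_cancel_right_of_invertible]
  have hMain : Hoᵀ * Covo⁻¹ * Ho = N⁻¹ := by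
    rw [Matrix.mul_assoc, h2, ← Matrix.mul_assoc, ← hK, Matrix.mul_inv_rev,
      Matrix.mul_inv_cancel_left_of_invertible]
  have hTC : Si * G⁻¹ * Uoᵀ * Covo = N * Hoᵀ := by
    rw [hCovo, hN, Matrix.mul_add, Matrix.add_mul, Matrix.mul_smul, Matrix.mul_one,
      Matrix.smul_mul, hKiT]
    congr 1
    rw [← Matrix.mul_assoc, ← Matrix.mul_assoc, hTHo, Matrix.one_mul]
  refine ⟨hCovoPD, ?_, ?_⟩
  · rw [hMain, Matrix.inv_inv_of_invertible, ← hTC, Matrix.mul_inv_cancel_right_of_invertible]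
  · rw [hMain, Matrix.inv_inv_of_invertible, hN, hKinv]
end

section
/- Let V be a real m×m orthogonal matrix (VᵀV = I_m) and S a real m×m diagonal matrix. Then ‖S Vᵀ − S‖_F² = 2 Σ_{i=1}^m S_{ii}² (1 − V_{ii}), and moreover ‖S Vᵀ − S‖_F² ≤ 2 tr(S²) · max_{1≤i≤m} (1 − V_{ii}) ≤ tr(S²) · ‖I_m − V‖_F², where in particular ‖I_m − V‖_F² = 2 tr(I_m − V). -/
open Matrix

/-!
Orthogonality `VᵀV = 1` gives, for each column, `∑ⱼ (1 - V)ⱼᵢ² = ((1 - V)ᵀ(1 - V))ᵢᵢ = 2 (1 - Vᵢᵢ)`.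
Row `i` of `SVᵀ - S` is `-sᵢ` times column `i` of `1 - V`, so both Frobenius norms follow from this
identity. Its left side is nonnegative, so `Vᵢᵢ ≤ 1`, and the maximum of the `1 - Vᵢᵢ` is at most
their sum `tr (1 - V)`.
-/

namespace Matrix
variable {n R : Type*} [Fintype n] [DecidableEq n]

omit [DecidableEq n] in
theorem sum_sq_apply_eq_transpose_mul_self_apply [CommRing R] (M : Matrix n n R) (i : n) :
    ∑ j, M j i ^ 2 = (Mᵀ * M) i i := by
  simp only [mul_apply, transpose_apply, sq]

theorem sum_sq_one_sub_apply_of_transpose_mul_self [CommRing R] {V : Matrix n n R}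
    (hV : Vᵀ * V = 1) (i : n) : ∑ j, (1 - V) j i ^ 2 = 2 * (1 - V i i) := by
  rw [sum_sq_apply_eq_transpose_mul_self_apply, transpose_sub, transpose_one, sub_mul, mul_sub,
    mul_sub, hV]
  simp only [mul_one, one_mul, sub_apply, one_apply_eq, transpose_apply]
  ring

theorem sum_sq_diagonal_mul_transpose_sub_diagonal [CommRing R] {V : Matrix n n R}
    (hV : Vᵀ * V = 1) (s : n → R) :
    ∑ i, ∑ j, (diagonal s * Vᵀ - diagonal s) i j ^ 2 = 2 * ∑ i, s i ^ 2 * (1 - V i i) := by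
  have hentry : ∀ i j, (diagonal s * Vᵀ - diagonal s) i j ^ 2 = s i ^ 2 * (1 - V) j i ^ 2 := by
    intro i j
    rw [← neg_sub, ← mul_one (diagonal s), mul_assoc, one_mul, ← mul_sub, ← transpose_one,
      ← transpose_sub, transpose_one, neg_apply, neg_sq, diagonal_mul, transpose_apply, mul_pow]
  simp_rw [hentry, ← Finset.mul_sum, sum_sq_one_sub_apply_of_transpose_mul_self hV, Finset.mul_sum]
  exact Finset.sum_congr rfl fun _ _ => mul_left_comm _ _ _

theorem sum_sq_one_sub_of_transpose_mul_self [CommRing R] {V : Matrix n n R}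
    (hV : Vᵀ * V = 1) : ∑ i, ∑ j, (1 - V) i j ^ 2 = 2 * (1 - V).trace := by
  rw [Finset.sum_comm]
  simp_rw [sum_sq_one_sub_apply_of_transpose_mul_self hV, ← Finset.mul_sum]
  simp only [trace, diag_apply, sub_apply, one_apply_eq]

theorem trace_diagonal_mul_self [CommRing R] (s : n → R) :
    (diagonal s * diagonal s).trace = ∑ i, s i ^ 2 := by
  simp [diagonal_mul_diagonal, trace_diagonal, sq]

theorem apply_self_le_one_of_transpose_mul_self [CommRing R] [LinearOrder R]
    [IsStrictOrderedRing R] {V : Matrix n n R} (hV : Vᵀ * V = 1) (i : n) : V i i ≤ 1 := by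
  have hcol := sum_sq_one_sub_apply_of_transpose_mul_self hV i
  have hnonneg : 0 ≤ ∑ j, (1 - V) j i ^ 2 := Finset.sum_nonneg fun _ _ => sq_nonneg _
  linarith

end Matrix

namespace Finset
variable {ι R : Type*} {s : Finset ι}

theorem sum_mul_le_sum_mul_sup' [Semiring R] [LinearOrder R] [IsOrderedRing R]
    (hs : s.Nonempty) {a : ι → R} (b : ι → R) (ha : ∀ i ∈ s, 0 ≤ a i) :
    ∑ i ∈ s, a i * b i ≤ (∑ i ∈ s, a i) * s.sup' hs b := by
  rw [sum_mul]
  exact sum_le_sum fun i hi => mul_le_mul_of_nonneg_left (le_sup' b hi) (ha i hi)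

theorem sup'_le_sum [AddCommMonoid R] [LinearOrder R] [IsOrderedAddMonoid R]
    (hs : s.Nonempty) {f : ι → R} (hf : ∀ i ∈ s, 0 ≤ f i) : s.sup' hs f ≤ ∑ i ∈ s, f i :=
  sup'_le hs f fun _ hi => single_le_sum hf hi

end Finset

/-- for orthogonal `V` and diagonal `S = diag(s)`,
`‖SVᵀ − S‖_F² = 2 Σᵢ sᵢ²(1 − Vᵢᵢ) ≤ 2 tr(S²) maxᵢ (1 − Vᵢᵢ) ≤ tr(S²) ‖I − V‖_F²`, and
`‖I − V‖_F² = 2 tr(I − V)`. -/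
theorem stmt_18 {m : ℕ} [NeZero m] (V : Matrix (Fin m) (Fin m) ℝ) (s : Fin m → ℝ)
    (hV : Vᵀ * V = 1) :
    (∑ i, ∑ j, (Matrix.diagonal s * Vᵀ - Matrix.diagonal s) i j ^ 2) =
        2 * ∑ i, s i ^ 2 * (1 - V i i) ∧
      (∑ i, ∑ j, (Matrix.diagonal s * Vᵀ - Matrix.diagonal s) i j ^ 2) ≤
        2 * (Matrix.diagonal s * Matrix.diagonal s).trace *
          (Finset.univ.sup' Finset.univ_nonempty fun i => 1 - V i i) ∧
      2 * (Matrix.diagonal s * Matrix.diagonal s).trace *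
          (Finset.univ.sup' Finset.univ_nonempty fun i => 1 - V i i) ≤
        (Matrix.diagonal s * Matrix.diagonal s).trace *
          (∑ i, ∑ j, ((1 : Matrix (Fin m) (Fin m) ℝ) - V) i j ^ 2) ∧
      (∑ i, ∑ j, ((1 : Matrix (Fin m) (Fin m) ℝ) - V) i j ^ 2) =
        2 * ((1 : Matrix (Fin m) (Fin m) ℝ) - V).trace := by
  have hdefect := sum_sq_diagonal_mul_transpose_sub_diagonal hV s
  have hfrob := sum_sq_one_sub_of_transpose_mul_self hV
  have htrace := trace_diagonal_mul_self s
  have hdiag_nonneg : ∀ i ∈ Finset.univ, 0 ≤ 1 - V i i := fun i _ =>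
    sub_nonneg.2 (apply_self_le_one_of_transpose_mul_self hV i)
  have hmax : Finset.univ.sup' Finset.univ_nonempty (fun i => 1 - V i i) ≤ (1 - V).trace := by
    simpa only [trace, diag_apply, Matrix.sub_apply, one_apply_eq] using
      Finset.sup'_le_sum Finset.univ_nonempty hdiag_nonneg
  refine ⟨hdefect, ?_, ?_, hfrob⟩
  · rw [hdefect, htrace, mul_assoc]
    gcongr
    exact Finset.sum_mul_le_sum_mul_sup' _ _ fun i _ => sq_nonneg (s i)
  · have htrace_nonneg : 0 ≤ (diagonal s * diagonal s).trace :=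
      htrace ▸ Finset.sum_nonneg fun i _ => sq_nonneg (s i)
    rw [hfrob, mul_comm 2, mul_assoc]
    gcongr
end
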